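/- Let u_i: ℝ^n → ℝ be differentiable strictly concave functions and x ∈ ℝ^n a point where ∂u_i/∂x_i(x) = −1 for all i, and suppose the benefits matrix B(x) (B_{ij} = ∂u_i/∂x_j for i≠j, B_{ii}=0, all entries nonnegative, B irreducible) has spectral radius exactly 1. Then there exists a strictly positive vector θ such that x maximizes ∑_i θ_i u_i over ℝ^n; in particular x is Pareto efficient. -/

import Mathlib

open Matrix Filter Topology
open scoped ENNReal

/-- Spectral radius of a real matrix: the maximum modulus of its complex eigenvalues. -/
noncomputable def specRad {n : ℕ} (M : Matrix (Fin n) (Fin n) ℝ) : ℝ :=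
  sSup {r : ℝ | ∃ μ : ℂ, μ ∈ spectrum ℂ (M.map (algebraMap ℝ ℂ)) ∧ r = ‖μ‖}

/-- A nonnegative matrix is irreducible if its digraph is strongly connected. -/
def MatIrreducible {n : ℕ} (M : Matrix (Fin n) (Fin n) ℝ) : Prop :=
  ∀ i j, ∃ t : ℕ, 0 < t ∧ 0 < (M ^ t) i j

/-!
By Perron–Frobenius, the irreducible nonnegative matrix `B` of spectral radius `1` has a strictly
positive left eigenvector `θ` for the eigenvalue `1`. Since the own-effect derivatives are `-1`,
the Jacobian is `D(x) = B - 1`, so `θᵀ D(x) = 0`: the gradient of `∑ θᵢ uᵢ` vanishes at `x`. The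
tangent-plane inequality for concave functions makes `x` a global maximizer of this weighted sum,
and a maximizer of a positively weighted sum is Pareto efficient.

For Perron–Frobenius, take an eigenvalue `μ` with `‖μ‖ = 1` and an eigenvector `v` of `B`ᵀ; then
`w = |v|` satisfies `w ≤ Bᵀ w`. Smoothing by `S = ∑_{t < N} (Bᵀ)^t`, which is entrywise positive
by irreducibility, gives a positive vector `S w` which is either fixed by `Bᵀ` or strictly
increased by it in every coordinate; in the latter case `‖(Bᵀ)^t‖` grows like `δ^t` for some
`δ > 1`, contradicting Gelfand's formula.
-/

namespace Matrix

variable {ι κ : Type*} [Fintype κ]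

lemma mulVec_mono_of_nonneg {A : Matrix ι κ ℝ} (hA : ∀ i j, 0 ≤ A i j) {v w : κ → ℝ}
    (h : v ≤ w) : A *ᵥ v ≤ A *ᵥ w := fun i =>
  Finset.sum_le_sum fun j _ => mul_le_mul_of_nonneg_left (h j) (hA i j)

lemma mulVec_apply_pos_of_pos {M : Matrix ι κ ℝ} (hM : ∀ i j, 0 < M i j) {w : κ → ℝ}
    (hw : 0 ≤ w) (hw0 : w ≠ 0) (i : ι) : 0 < (M *ᵥ w) i := by
  obtain ⟨j, hj⟩ := Function.ne_iff.mp hw0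
  exact Finset.sum_pos' (fun k _ => mul_nonneg (hM i k).le (hw k))
    ⟨j, Finset.mem_univ j, mul_pos (hM i j) ((hw j).lt_of_ne' hj)⟩

variable [Fintype ι]

lemma exists_mulVec_eq_smul_of_mem_spectrum [DecidableEq ι] {M : Matrix ι ι ℂ} {μ : ℂ}
    (hμ : μ ∈ spectrum ℂ M) : ∃ v ≠ 0, M *ᵥ v = μ • v := by
  rw [← spectrum_toLin', ← Module.End.hasEigenvalue_iff_mem_spectrum] at hμ
  obtain ⟨v, hv⟩ := hμ.exists_hasEigenvector
  exact ⟨v, hv.2, by simpa using hv.apply_eq_smul⟩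

lemma spectrum_transpose [DecidableEq ι] {R : Type*} [CommRing R] (M : Matrix ι ι R) :
    spectrum R Mᵀ = spectrum R M := by
  ext μ
  rw [spectrum.mem_iff, spectrum.mem_iff, ← isUnit_transpose, transpose_sub,
    transpose_transpose, algebraMap_eq_diagonal, diagonal_transpose]

lemma norm_smul_le_mulVec_norm {A : Matrix ι ι ℝ} (hA : ∀ i j, 0 ≤ A i j) {v : ι → ℂ} {μ : ℂ}
    (h : A.map (algebraMap ℝ ℂ) *ᵥ v = μ • v) :
    ‖μ‖ • (fun i => ‖v i‖) ≤ A *ᵥ fun i => ‖v i‖ := by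
  intro i
  calc ‖μ‖ * ‖v i‖ = ‖∑ j, (A i j : ℂ) * v j‖ := by
        rw [← norm_mul, ← smul_eq_mul, ← Pi.smul_apply, ← h]; rfl
    _ ≤ ∑ j, ‖(A i j : ℂ) * v j‖ := norm_sum_le _ _
    _ = ∑ j, A i j * ‖v j‖ := by
        simp only [norm_mul, Complex.norm_real, Real.norm_of_nonneg (hA i _)]

lemma pow_smul_le_pow_mulVec [DecidableEq ι] {A : Matrix ι ι ℝ} (hA : ∀ i j, 0 ≤ A i j)
    {v : ι → ℝ} {δ : ℝ} (hδ : 0 ≤ δ) (h : δ • v ≤ A *ᵥ v) (t : ℕ) :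
    δ ^ t • v ≤ A ^ t *ᵥ v := by
  induction t with
  | zero => simp
  | succ t ih =>
    calc δ ^ (t + 1) • v = δ • δ ^ t • v := by rw [pow_succ', mul_smul]
      _ ≤ δ • (A ^ t *ᵥ v) := smul_le_smul_of_nonneg_left ih hδ
      _ = A ^ t *ᵥ (δ • v) := (mulVec_smul _ _ _).symm
      _ ≤ A ^ t *ᵥ (A *ᵥ v) := mulVec_mono_of_nonneg (pow_apply_nonneg hA t) h
      _ = A ^ (t + 1) *ᵥ v := by rw [mulVec_mulVec, pow_succ]

lemma exists_one_lt_smul_le {a b : ι → ℝ} (h : ∀ i, a i < b i) :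
    ∃ δ : ℝ, 1 < δ ∧ δ • a ≤ b := by
  have hnear : ∀ᶠ δ in 𝓝[>] (1 : ℝ), ∀ i, δ * a i < b i :=
    eventually_all.2 fun i => nhdsWithin_le_nhds <|
      ContinuousAt.eventually_lt (by fun_prop) continuousAt_const (by simpa using h i)
  obtain ⟨δ, hδ, hδ1⟩ := (hnear.and self_mem_nhdsWithin).exists
  exact ⟨δ, hδ1, fun i => (hδ i).le⟩

section LinftyOpNorm

attribute [local instance] Matrix.linftyOpNormedAddCommGroup Matrix.linftyOpNormedRing
  Matrix.linftyOpNormedAlgebra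

lemma linfty_opNorm_map_ofReal (M : Matrix ι κ ℝ) : ‖M.map (algebraMap ℝ ℂ)‖ = ‖M‖ := by
  simp [linfty_opNorm_def, Complex.nnnorm_real]

lemma pow_le_norm_pow_of_smul_le_mulVec [DecidableEq ι] {A : Matrix ι ι ℝ}
    (hA : ∀ i j, 0 ≤ A i j) {v : ι → ℝ} (hv : 0 ≤ v) (hv0 : v ≠ 0) {δ : ℝ} (hδ : 0 ≤ δ)
    (h : δ • v ≤ A *ᵥ v) (t : ℕ) : δ ^ t ≤ ‖A.map (algebraMap ℝ ℂ) ^ t‖ := by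
  have hpow := pow_smul_le_pow_mulVec hA hδ h t
  have hnorm : δ ^ t * ‖v‖ ≤ ‖A ^ t *ᵥ v‖ := by
    rw [← Real.norm_of_nonneg (pow_nonneg hδ t), ← norm_smul]
    refine (pi_norm_le_iff_of_nonneg (norm_nonneg _)).2 fun i => ?_
    rw [Real.norm_of_nonneg (smul_nonneg (pow_nonneg hδ t) hv i)]
    exact (hpow i).trans ((Real.le_norm_self _).trans (norm_le_pi_norm _ i))
  rw [← Matrix.map_pow, linfty_opNorm_map_ofReal]
  exact le_of_mul_le_mul_right (hnorm.trans (linfty_opNorm_mulVec _ _)) (norm_pos_iff.2 hv0)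

lemma ofReal_le_spectralRadius_of_smul_le_mulVec [DecidableEq ι] {A : Matrix ι ι ℝ}
    (hA : ∀ i j, 0 ≤ A i j) {v : ι → ℝ} (hv : 0 ≤ v) (hv0 : v ≠ 0) {δ : ℝ}
    (h : δ • v ≤ A *ᵥ v) : ENNReal.ofReal δ ≤ spectralRadius ℂ (A.map (algebraMap ℝ ℂ)) := by
  rcases le_or_gt δ 0 with hδ | hδ
  · simp [ENNReal.ofReal_of_nonpos hδ]
  refine ge_of_tendsto (spectrum.pow_norm_pow_one_div_tendsto_nhds_spectralRadius _) ?_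
  filter_upwards [eventually_ne_atTop 0] with t ht
  refine ENNReal.ofReal_le_ofReal ?_
  calc δ = (δ ^ t) ^ (1 / t : ℝ) := by rw [one_div, Real.pow_rpow_inv_natCast hδ.le ht]
    _ ≤ _ := Real.rpow_le_rpow (pow_nonneg hδ.le t)
        (pow_le_norm_pow_of_smul_le_mulVec hA hv hv0 hδ.le h t) (by positivity)

lemma spectralRadius_map_eq_ofReal_specRad {n : ℕ} (M : Matrix (Fin n) (Fin n) ℝ) :
    spectralRadius ℂ (M.map (algebraMap ℝ ℂ)) = ENNReal.ofReal (specRad M) := by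
  rcases (spectrum ℂ (M.map (algebraMap ℝ ℂ))).eq_empty_or_nonempty with h | h
  · rw [spectralRadius, specRad, h]
    simp
  obtain ⟨z, hz, hzρ⟩ := spectrum.exists_nnnorm_eq_spectralRadius_of_nonempty h
  have hmax : specRad M = ‖z‖ := by
    refine IsGreatest.csSup_eq ⟨⟨z, hz, rfl⟩, ?_⟩
    rintro _ ⟨μ, hμ, rfl⟩
    have : (‖μ‖₊ : ℝ≥0∞) ≤ ‖z‖₊ := hzρ ▸ le_iSup₂ (f := fun μ _ => (‖μ‖₊ : ℝ≥0∞)) μ hμ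
    exact_mod_cast this
  rw [hmax, ofReal_norm, ← hzρ]
  rfl

namespace IsIrreducible

variable [DecidableEq ι] {A : Matrix ι ι ℝ}

lemma exists_sum_pow_pos (hA : A.IsIrreducible) :
    ∃ N, ∀ i j, 0 < (∑ t ∈ Finset.range N, A ^ t) i j := by
  choose k _ hk using (isIrreducible_iff_exists_pow_pos hA.nonneg).1 hA
  refine ⟨(Finset.univ.sup fun p : ι × ι => k p.1 p.2) + 1, fun i j => ?_⟩
  rw [sum_apply]
  refine (hk i j).trans_le <| Finset.single_le_sum (f := fun t => (A ^ t) i j)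
    (fun t _ => pow_apply_nonneg hA.nonneg t i j) (Finset.mem_range.2 (Nat.lt_succ_of_le ?_))
  exact Finset.le_sup (f := fun p : ι × ι => k p.1 p.2) (Finset.mem_univ (i, j))

theorem exists_pos_mulVec_eq_self_of_le_mulVec (hA : A.IsIrreducible)
    (hρ : spectralRadius ℂ (A.map (algebraMap ℝ ℂ)) ≤ 1) {w : ι → ℝ} (hw : 0 ≤ w) (hw0 : w ≠ 0)
    (hsub : w ≤ A *ᵥ w) : ∃ θ : ι → ℝ, (∀ i, 0 < θ i) ∧ A *ᵥ θ = θ := by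
  obtain ⟨N, hS⟩ := hA.exists_sum_pow_pos
  set S := ∑ t ∈ Finset.range N, A ^ t
  have hSw : ∀ i, 0 < (S *ᵥ w) i := mulVec_apply_pos_of_pos hS hw hw0
  have hcomm : A *ᵥ (S *ᵥ w) = S *ᵥ (A *ᵥ w) := by
    rw [mulVec_mulVec, mulVec_mulVec,
      (Commute.sum_right _ _ _ fun t _ => Commute.self_pow A t).eq]
  refine ⟨S *ᵥ w, hSw, ?_⟩
  by_contra hne
  -- `A (S w) - S w = S (A w - w)`, and `S` maps the nonzero vector `A w - w ≥ 0` to a positive one.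
  have hz0 : A *ᵥ w - w ≠ 0 := fun h => hne (by rw [hcomm, sub_eq_zero.1 h])
  have hlt : ∀ i, (S *ᵥ w) i < (A *ᵥ (S *ᵥ w)) i := by
    intro i
    have := mulVec_apply_pos_of_pos hS (sub_nonneg.2 hsub) hz0 i
    rwa [mulVec_sub, ← hcomm, Pi.sub_apply, sub_pos] at this
  obtain ⟨δ, hδ1, hδ⟩ := exists_one_lt_smul_le hlt
  obtain ⟨j, -⟩ := Function.ne_iff.mp hw0
  have := (ofReal_le_spectralRadius_of_smul_le_mulVec hA.nonneg (fun i => (hSw i).le)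
    (fun h => (hSw j).ne' (congrFun h j)) hδ).trans hρ
  exact hδ1.not_ge (ENNReal.ofReal_le_one.1 this)

theorem exists_pos_mulVec_eq_self (hA : A.IsIrreducible)
    (hρ : spectralRadius ℂ (A.map (algebraMap ℝ ℂ)) = 1) :
    ∃ θ : ι → ℝ, (∀ i, 0 < θ i) ∧ A *ᵥ θ = θ := by
  have hne : (spectrum ℂ (A.map (algebraMap ℝ ℂ))).Nonempty := by
    by_contra h
    rw [spectralRadius, Set.not_nonempty_iff_eq_empty.1 h] at hρ
    simp at hρ
  obtain ⟨μ, hμ, hμρ⟩ := spectrum.exists_nnnorm_eq_spectralRadius_of_nonempty hne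
  obtain ⟨v, hv0, hv⟩ := exists_mulVec_eq_smul_of_mem_spectrum hμ
  have hμ1 : ‖μ‖ = 1 := by
    rw [hρ, ENNReal.coe_eq_one] at hμρ
    simpa using congrArg NNReal.toReal hμρ
  refine hA.exists_pos_mulVec_eq_self_of_le_mulVec hρ.le (fun i => norm_nonneg (v i))
    (fun h => hv0 (funext fun i => norm_eq_zero.1 (congrFun h i))) ?_
  simpa [hμ1] using norm_smul_le_mulVec_norm hA.nonneg hv

end IsIrreducible

end LinftyOpNorm

end Matrix

lemma exists_pos_vecMul_eq_self_of_specRad_eq_one {n : ℕ} {B : Matrix (Fin n) (Fin n) ℝ}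
    (hB : ∀ i j, 0 ≤ B i j) (hirr : MatIrreducible B) (hρ : specRad B = 1) :
    ∃ θ : Fin n → ℝ, (∀ i, 0 < θ i) ∧ θ ᵥ* B = θ := by
  have hirrT : Bᵀ.IsIrreducible := ((isIrreducible_iff_exists_pow_pos hB).2 hirr).transpose
  have hρT : spectralRadius ℂ (Bᵀ.map (algebraMap ℝ ℂ)) = 1 := by
    rw [spectralRadius, transpose_map, spectrum_transpose, ← spectralRadius,
      spectralRadius_map_eq_ofReal_specRad, hρ, ENNReal.ofReal_one]
  obtain ⟨θ, hθ, hθB⟩ := hirrT.exists_pos_mulVec_eq_self hρT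
  exact ⟨θ, hθ, by rwa [mulVec_transpose] at hθB⟩

lemma ConcaveOn.le_add_of_hasFDerivAt {E : Type*} [NormedAddCommGroup E] [NormedSpace ℝ E]
    {s : Set E} {f : E → ℝ} {f' : E →L[ℝ] ℝ} {x y : E} (hf : ConcaveOn ℝ s f) (hx : x ∈ s)
    (hy : y ∈ s) (hf' : HasFDerivAt f f' x) : f y ≤ f x + f' (y - x) := by
  set g := AffineMap.lineMap (k := ℝ) x y
  have hg0 : g 0 = x := AffineMap.lineMap_apply_zero x y
  have hg1 : g 1 = y := AffineMap.lineMap_apply_one x y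
  have hline : ConcaveOn ℝ (g ⁻¹' s) (f ∘ g) := hf.comp_affineMap g
  have hd : HasDerivAt (f ∘ g) (f' (y - x)) 0 :=
    (hg0 ▸ hf').comp_hasDerivAt 0 AffineMap.hasDerivAt_lineMap
  have := hline.slope_le_of_hasDerivAt (x := 0) (y := 1) (by simpa [hg0]) (by simpa [hg1])
    one_pos hd
  simp only [slope_def_field, Function.comp_apply, hg0, hg1, sub_zero, div_one] at this
  linarith

section Jacobian

variable {ι κ : Type*} [DecidableEq κ] {x : κ → ℝ}

noncomputable def jacobianMatrix (u : ι → (κ → ℝ) → ℝ) (x : κ → ℝ) : Matrix ι κ ℝ :=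
  of fun i j => fderiv ℝ (u i) x (Pi.single j 1)

lemma jacobianMatrix_eq_sub_one {u : κ → (κ → ℝ) → ℝ} {B : Matrix κ κ ℝ}
    (hown : ∀ i, fderiv ℝ (u i) x (Pi.single i 1) = -1)
    (hB : ∀ i j, B i j = if i = j then 0 else fderiv ℝ (u i) x (Pi.single j 1)) :
    jacobianMatrix u x = B - 1 := by
  ext i j
  by_cases h : i = j
  · subst h
    simp [jacobianMatrix, hown, hB]
  · simp [jacobianMatrix, hB, h]

variable [Fintype κ] {u : ι → (κ → ℝ) → ℝ}

lemma jacobianMatrix_mulVec (v : κ → ℝ) :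
    jacobianMatrix u x *ᵥ v = fun i => fderiv ℝ (u i) x v := by
  ext i
  conv_rhs => rw [← Finset.univ_sum_single v, map_sum]
  refine Finset.sum_congr rfl fun j _ => ?_
  simp only [jacobianMatrix, of_apply]
  rw [mul_comm, ← smul_eq_mul, ← map_smul, ← Pi.single_smul, smul_eq_mul, mul_one]

variable [Fintype ι]

lemma sum_mul_le_of_vecMul_jacobianMatrix_eq_zero {θ : ι → ℝ} (hθ : 0 ≤ θ)
    (hconc : ∀ i, ConcaveOn ℝ Set.univ (u i)) (hdiff : ∀ i, DifferentiableAt ℝ (u i) x)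
    (hJ : θ ᵥ* jacobianMatrix u x = 0) (y : κ → ℝ) :
    ∑ i, θ i * u i y ≤ ∑ i, θ i * u i x :=
  calc ∑ i, θ i * u i y ≤ ∑ i, θ i * (u i x + fderiv ℝ (u i) x (y - x)) :=
        Finset.sum_le_sum fun i _ => mul_le_mul_of_nonneg_left ((hconc i).le_add_of_hasFDerivAt
          (Set.mem_univ x) (Set.mem_univ y) (hdiff i).hasFDerivAt) (hθ i)
    _ = ∑ i, θ i * u i x + θ ⬝ᵥ (jacobianMatrix u x *ᵥ (y - x)) := by
        simp [jacobianMatrix_mulVec, dotProduct, mul_add, Finset.sum_add_distrib]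
    _ = ∑ i, θ i * u i x := by rw [dotProduct_mulVec, hJ, zero_dotProduct, add_zero]

end Jacobian

def IsParetoEfficient {ι X : Type*} (u : ι → X → ℝ) (x : X) : Prop :=
  ¬∃ y, (∀ i, u i x ≤ u i y) ∧ ∃ j, u j x < u j y

lemma isParetoEfficient_of_sum_mul_le {ι X : Type*} [Fintype ι] {u : ι → X → ℝ} {x : X}
    {θ : ι → ℝ} (hθ : ∀ i, 0 < θ i) (hmax : ∀ y, ∑ i, θ i * u i y ≤ ∑ i, θ i * u i x) :
    IsParetoEfficient u x := by
  rintro ⟨y, hy, j, hj⟩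
  exact (hmax y).not_gt <| Finset.sum_lt_sum
    (fun i _ => mul_le_mul_of_nonneg_left (hy i) (hθ i).le)
    ⟨j, Finset.mem_univ j, mul_lt_mul_of_pos_left hj (hθ j)⟩

theorem stmt_13 (n : ℕ) (u : Fin n → (Fin n → ℝ) → ℝ)
    (hdiff : ∀ i, Differentiable ℝ (u i))
    (hconc : ∀ i, StrictConcaveOn ℝ Set.univ (u i))
    (x : Fin n → ℝ)
    (hown : ∀ i, fderiv ℝ (u i) x (Pi.single i 1) = -1)
    (B : Matrix (Fin n) (Fin n) ℝ)
    (hB : ∀ i j, B i j = if i = j then 0 else fderiv ℝ (u i) x (Pi.single j 1))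
    (hBnonneg : ∀ i j, 0 ≤ B i j)
    (hirr : MatIrreducible B)
    (hρ : specRad B = 1) :
    (∃ θ : Fin n → ℝ, (∀ i, 0 < θ i) ∧
      ∀ y : Fin n → ℝ, ∑ i, θ i * u i y ≤ ∑ i, θ i * u i x) ∧
    ¬∃ y : Fin n → ℝ, (∀ i, u i x ≤ u i y) ∧ ∃ j, u j x < u j y := by
  obtain ⟨θ, hθ, hθB⟩ := exists_pos_vecMul_eq_self_of_specRad_eq_one hBnonneg hirr hρ
  have hJ : θ ᵥ* jacobianMatrix u x = 0 := by
    rw [jacobianMatrix_eq_sub_one hown hB, vecMul_sub, vecMul_one, hθB, sub_self]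
  have hmax := sum_mul_le_of_vecMul_jacobianMatrix_eq_zero (fun i => (hθ i).le)
    (fun i => (hconc i).concaveOn) (fun i => hdiff i x) hJ
  exact ⟨⟨θ, hθ, hmax⟩, isParetoEfficient_of_sum_mul_le hθ hmax⟩
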